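/- Let P be a predicate on quadruples (u,a,b,v) that is compatible with relabeling and compatible with subwords. Then ≡_P is a congruence for the left composition of packed words: for packed words u, u' with letter set {1,…,n}, packed words v, v' with letter set {1,…,m}, and i ∈ {1,…,n}, if u ≡_P u' and v ≡_P v', then u ∘←_i v ≡_P u' ∘←_i v'. -/

import Mathlib

/-- Increment by `α` every letter strictly greater than `β`. -/
def Inc (α β : ℕ) (u : List ℕ) : List ℕ := u.map fun a => if β < a then a + α else a

/-- Maximal letter of a word. -/
def maxLetter (v : List ℕ) : ℕ := v.foldr max 0

/-- A packed word whose letter set is exactly `{1, …, k}`. -/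
def IsPackedOn (k : ℕ) (w : List ℕ) : Prop := w.toFinset = Finset.Icc 1 k

/-- A packed word. -/
def IsPacked (w : List ℕ) : Prop := ∃ k, IsPackedOn k w

/-- A permutation of `{1, …, n}` identified with the word `σ(1) ⋯ σ(n)`. -/
def IsPermWord (n : ℕ) (σ : List ℕ) : Prop :=
  σ.length = n ∧ σ.toFinset = Finset.Icc 1 n

/-- `σ` is the standardization of `w`: a permutation word of `{1, …, n}` with the same
inversions as `w` (0-based indexing). -/
def IsStdOf (w σ : List ℕ) : Prop :=
  IsPermWord w.length σ ∧
    ∀ i j : ℕ, i < j → j < w.length →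
      (w.getD j 0 < w.getD i 0 ↔ σ.getD j 0 < σ.getD i 0)

/-- The weakly increasing rearrangement (composition type) of a word. -/
def chi (w : List ℕ) : List ℕ := List.insertionSort (· ≤ ·) w

/-- Right composition `u ∘→_i v` of packed words (`i` is 1-based). -/
def rightComp (u : List ℕ) (i : ℕ) (v : List ℕ) : List ℕ :=
  Inc (maxLetter v - 1) (u.getD (i - 1) 0) (u.take (i - 1))
    ++ Inc (u.getD (i - 1) 0 - 1) 0 v
    ++ Inc (maxLetter v - 1) (u.getD (i - 1) 0 - 1) (u.drop i)

/-- Left composition `u ∘←_i v` of packed words: replace in `Inc (m-1) i u` every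
occurrence of the letter `i` by the word `Inc (i-1) 0 v`, where `m` is the maximal
letter of `v`. -/
def leftComp (u : List ℕ) (i : ℕ) (v : List ℕ) : List ℕ :=
  u.flatMap fun a =>
    if a = i then Inc (i - 1) 0 v else [if i < a then a + (maxLetter v - 1) else a]

/-- Block composition `B_i(α, β)` of permutation words (`i` is 1-based, `β` a permutation
of `{1, …, m}` with `m = β.length`). -/
def blockComp (α : List ℕ) (i : ℕ) (β : List ℕ) : List ℕ :=
  Inc (β.length - 1) (α.getD (i - 1) 0) (α.take (i - 1))
    ++ Inc (α.getD (i - 1) 0 - 1) 0 β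
    ++ Inc (β.length - 1) (α.getD (i - 1) 0 - 1) (α.drop i)

/-- The inverse of a permutation word. -/
def invWord (σ : List ℕ) : List ℕ :=
  (List.range σ.length).map fun p => σ.idxOf (p + 1) + 1

/-- The right action of a permutation word `σ` of `{1, …, n}` on a packed word with
letter set `{1, …, n}`: the `p`-th letter of `u · σ` is `σ⁻¹(u(p))`. -/
def permAct (u σ : List ℕ) : List ℕ := u.map fun a => (invWord σ).getD (a - 1) 0

/-- The identity permutation word of `{1, …, m}`. -/
def idWord (m : ℕ) : List ℕ := (List.range m).map (· + 1)

/-- `First k u`: keep only the `k` leftmost occurrences of each letter of `u`. -/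
def First (k : ℕ) (u : List ℕ) : List ℕ :=
  (List.range u.length).filterMap fun p =>
    if (u.take p).count (u.getD p 0) < k then some (u.getD p 0) else none


/-- One-step rewriting relation on words: `u·a·b·v ↔ u·b·a·v` whenever `P u a b v` holds. -/
def StepRel (P : List ℕ → ℕ → ℕ → List ℕ → Prop) (x y : List ℕ) : Prop :=
  ∃ u a b v, P u a b v ∧ x = u ++ a :: b :: v ∧ y = u ++ b :: a :: v

/-- `≡_P`: the reflexive, symmetric, transitive closure of the one-step relation. -/
def EquivP (P : List ℕ → ℕ → ℕ → List ℕ → Prop) : List ℕ → List ℕ → Prop :=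
  Relation.EqvGen (StepRel P)

/-- `P` is compatible with subwords. -/
def SubwordCompat (P : List ℕ → ℕ → ℕ → List ℕ → Prop) : Prop :=
  ∀ u a b v u' v', P u a b v → u.Sublist u' → v.Sublist v' → P u' a b v'

/-- `P` is compatible with relabeling by strictly monotone maps of the positive integers. -/
def RelabelCompat (P : List ℕ → ℕ → ℕ → List ℕ → Prop) : Prop :=
  ∀ f : ℕ → ℕ, StrictMono f → (∀ x, 0 < x → 0 < f x) →
    ∀ u a b v, P u a b v → P (u.map f) (f a) (f b) (v.map f)

/-- `P` is right-trivial. -/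
def RightTrivial (P : List ℕ → ℕ → ℕ → List ℕ → Prop) : Prop :=
  ∀ u a b v, P u a b v → P u a b []

/-- Lexicographic order on words. -/
def LexLE (x y : List ℕ) : Prop := x = y ∨ List.Lex (· < ·) x y

/-!
A transposition in `v` is carried to every copy of `Inc_{i-1}^0 v` inside `u ∘←_i v` by
relabeling (`Inc_{i-1}^0` is strictly monotone) and then enlarging the context (subword
compatibility). A transposition `w a b w' ↔ w b a w'` in `u` becomes the exchange of the two
blocks that replace `a` and `b`. Each pair `x, y` of letters from these blocks is the image of
`(a, b)` under a strictly monotone relabeling that sends `i` to a letter of the block of `v` and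
every other letter to its image in the composition; the relabeled `w`, `w'` are subwords of the
composed context, so the blocks can be exchanged one transposition at a time.
-/

open Relation

local notation:50 x:51 " ≡[" P "] " y:51 => EquivP P x y

-- `Inc α β` is definitionally `List.map (incLetter α β)`; the proofs below use this.
def incLetter (α β a : ℕ) : ℕ := if β < a then a + α else a

theorem incLetter_strictMono (α β : ℕ) : StrictMono (incLetter α β) := by
  intro a b h
  unfold incLetter
  split_ifs <;> omega

theorem incLetter_pos (α β a : ℕ) (ha : 0 < a) : 0 < incLetter α β a := by
  unfold incLetter
  split_ifs <;> omega

theorem update_incLetter_strictMono {α i z : ℕ} (hiz : i ≤ z) (hzi : z ≤ i + α) :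
    StrictMono (Function.update (incLetter α i) i z) := by
  intro a b h
  simp only [Function.update_apply, incLetter]
  split_ifs <;> omega

theorem update_incLetter_pos {α i z : ℕ} (hiz : i ≤ z) (a : ℕ) (ha : 0 < a) :
    0 < Function.update (incLetter α i) i z a := by
  simp only [Function.update_apply, incLetter]
  split_ifs <;> omega

theorem le_maxLetter {v : List ℕ} {x : ℕ} (hx : x ∈ v) : x ≤ maxLetter v :=
  List.le_max_of_le hx le_rfl

theorem maxLetter_eq_of_perm {v v' : List ℕ} (h : v.Perm v') : maxLetter v = maxLetter v' :=
  h.foldr_eq 0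

def leftCompBlock (i : ℕ) (v : List ℕ) (a : ℕ) : List ℕ :=
  if a = i then Inc (i - 1) 0 v else [incLetter (maxLetter v - 1) i a]

theorem leftComp_eq_flatMap (u : List ℕ) (i : ℕ) (v : List ℕ) :
    leftComp u i v = u.flatMap (leftCompBlock i v) := rfl

theorem mem_Inc_bounds {i z : ℕ} {v : List ℕ} (hi : 1 ≤ i) (hpos : ∀ c ∈ v, 0 < c)
    (hz : z ∈ Inc (i - 1) 0 v) : i ≤ z ∧ z ≤ i + (maxLetter v - 1) := by
  obtain ⟨c, hc, rfl⟩ := List.mem_map.1 hz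
  have hc0 := hpos c hc
  have := le_maxLetter hc
  simp only [if_pos hc0]
  omega

theorem map_update_sublist_flatMap_leftCompBlock {i z : ℕ} {v : List ℕ}
    (hz : z ∈ Inc (i - 1) 0 v) (w : List ℕ) :
    (w.map (Function.update (incLetter (maxLetter v - 1) i) i z)).Sublist
      (w.flatMap (leftCompBlock i v)) := by
  rw [List.map_eq_flatMap]
  refine List.Sublist.flatMap_right w fun c _ => ?_
  by_cases hc : c = i
  · subst hc
    simpa [leftCompBlock] using hz
  · simp [leftCompBlock, hc]

section

variable {P : List ℕ → ℕ → ℕ → List ℕ → Prop}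

instance : @Trans (List ℕ) (List ℕ) (List ℕ) (EquivP P) (EquivP P) (EquivP P) :=
  ⟨EqvGen.trans _ _ _⟩

theorem EquivP.of_eq {x y : List ℕ} (h : x = y) : x ≡[P] y := h ▸ EqvGen.refl x

theorem EquivP.comap {f : List ℕ → List ℕ} (hf : ∀ x y, StepRel P x y → f x ≡[P] f y)
    {x y : List ℕ} (h : x ≡[P] y) : f x ≡[P] f y :=
  ((InvImage.equivalence _ f (EqvGen.is_equivalence _)).eqvGen_iff).1 (EqvGen.mono hf _ _ h)

theorem EquivP.perm {x y : List ℕ} (h : x ≡[P] y) : x.Perm y := by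
  induction h with
  | rel x y h =>
    obtain ⟨u, a, b, v, -, rfl, rfl⟩ := h
    exact .append_left u (.swap b a v)
  | refl x => exact .refl x
  | symm _ _ _ ih => exact ih.symm
  | trans _ _ _ _ _ ih₁ ih₂ => exact ih₁.trans ih₂

theorem EquivP.swap {C D : List ℕ} {x y : ℕ} (h : P C x y D) :
    C ++ x :: y :: D ≡[P] C ++ y :: x :: D :=
  EqvGen.rel _ _ ⟨C, x, y, D, h, rfl, rfl⟩

theorem StepRel.append_context (hsub : SubwordCompat P) {x y : List ℕ} (A B : List ℕ)
    (h : StepRel P x y) : StepRel P (A ++ x ++ B) (A ++ y ++ B) := by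
  obtain ⟨u, a, b, v, hP, rfl, rfl⟩ := h
  exact ⟨A ++ u, a, b, v ++ B, hsub _ _ _ _ _ _ hP (List.sublist_append_right A u)
    (List.sublist_append_left v B), by simp, by simp⟩

theorem EquivP.append (hsub : SubwordCompat P) {x x' y y' : List ℕ}
    (hx : x ≡[P] x') (hy : y ≡[P] y') : x ++ y ≡[P] x' ++ y' :=
  calc x ++ y ≡[P] x' ++ y :=
        hx.comap (f := (· ++ y)) fun _ _ h => .rel _ _ (by simpa using h.append_context hsub [] y)
    _ ≡[P] x' ++ y' := hy.comap fun _ _ h => .rel _ _ (by simpa using h.append_context hsub x' [])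

theorem EquivP.flatMap (hsub : SubwordCompat P) {f g : ℕ → List ℕ} :
    ∀ {u : List ℕ}, (∀ c ∈ u, f c ≡[P] g c) → u.flatMap f ≡[P] u.flatMap g
  | [], _ => EqvGen.refl _
  | c :: u, h => by
    simpa only [List.flatMap_cons] using (h c (by simp)).append hsub
      (EquivP.flatMap hsub fun c' hc' => h c' (List.mem_cons_of_mem c hc'))

theorem EquivP.map (hrel : RelabelCompat P) {f : ℕ → ℕ} (hf : StrictMono f)
    (hpos : ∀ x, 0 < x → 0 < f x) {x y : List ℕ} (h : x ≡[P] y) : x.map f ≡[P] y.map f :=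
  h.comap fun _ _ ⟨u, a, b, v, hP, hx, hy⟩ =>
    .rel _ _ ⟨u.map f, f a, f b, v.map f, hrel f hf hpos u a b v hP, by simp [hx], by simp [hy]⟩

theorem EquivP.append_singleton_append (hsub : SubwordCompat P) {C D X : List ℕ} {y : ℕ}
    (h : ∀ x ∈ X, P C x y D) :
    C ++ X ++ [y] ++ D ≡[P] C ++ [y] ++ X ++ D := by
  induction X generalizing C with
  | nil => exact EquivP.of_eq (by simp)
  | cons x X ih =>
    have hX : ∀ z ∈ X, P (C ++ [x]) z y D := fun z hz =>
      hsub _ _ _ _ _ _ (h z (List.mem_cons_of_mem x hz)) (List.sublist_append_left C [x]) (.refl _)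
    have hx : P C x y (X ++ D) :=
      hsub _ _ _ _ _ _ (h x List.mem_cons_self) (.refl _) (List.sublist_append_right X D)
    calc C ++ x :: X ++ [y] ++ D = C ++ [x] ++ X ++ [y] ++ D := by simp
      _ ≡[P] C ++ [x] ++ [y] ++ X ++ D := ih hX
      _ = C ++ x :: y :: (X ++ D) := by simp
      _ ≡[P] C ++ y :: x :: (X ++ D) := EquivP.swap hx
      _ = C ++ [y] ++ x :: X ++ D := by simp

theorem EquivP.append_swap_blocks (hsub : SubwordCompat P) {C D X Y : List ℕ}
    (h : ∀ x ∈ X, ∀ y ∈ Y, P C x y D) :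
    C ++ X ++ Y ++ D ≡[P] C ++ Y ++ X ++ D := by
  induction Y generalizing C with
  | nil => exact EquivP.of_eq (by simp)
  | cons y Y ih =>
    have hy : ∀ x ∈ X, P C x y (Y ++ D) := fun x hx =>
      hsub _ _ _ _ _ _ (h x hx y List.mem_cons_self) (.refl _) (List.sublist_append_right Y D)
    have hY : ∀ x ∈ X, ∀ z ∈ Y, P (C ++ [y]) x z D := fun x hx z hz =>
      hsub _ _ _ _ _ _ (h x hx z (List.mem_cons_of_mem y hz)) (List.sublist_append_left C [y])
        (.refl _)
    calc C ++ X ++ y :: Y ++ D = C ++ X ++ [y] ++ (Y ++ D) := by simp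
      _ ≡[P] C ++ [y] ++ X ++ (Y ++ D) := EquivP.append_singleton_append hsub hy
      _ = C ++ [y] ++ X ++ Y ++ D := by simp
      _ ≡[P] C ++ [y] ++ Y ++ X ++ D := ih hY
      _ = C ++ y :: Y ++ X ++ D := by simp

theorem EquivP.leftComp_right (hrel : RelabelCompat P) (hsub : SubwordCompat P)
    (u : List ℕ) (i : ℕ) {v v' : List ℕ} (h : v ≡[P] v') :
    leftComp u i v ≡[P] leftComp u i v' := by
  have hmax : maxLetter v = maxLetter v' := maxLetter_eq_of_perm h.perm
  have hblock : Inc (i - 1) 0 v ≡[P] Inc (i - 1) 0 v' :=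
    h.map hrel (incLetter_strictMono _ _) (incLetter_pos _ _)
  refine EquivP.flatMap hsub fun c _ => ?_
  show leftCompBlock i v c ≡[P] leftCompBlock i v' c
  unfold leftCompBlock
  rw [hmax]
  split_ifs
  exacts [hblock, EqvGen.refl _]

theorem leftCompBlock_relabel (hrel : RelabelCompat P) (hsub : SubwordCompat P) {i z : ℕ}
    {v w w' : List ℕ} {a b : ℕ} (hi : 1 ≤ i) (hpos : ∀ c ∈ v, 0 < c)
    (hz : z ∈ Inc (i - 1) 0 v) (hP : P w a b w') :
    let f := Function.update (incLetter (maxLetter v - 1) i) i z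
    P (w.flatMap (leftCompBlock i v)) (f a) (f b) (w'.flatMap (leftCompBlock i v)) := by
  obtain ⟨hiz, hzi⟩ := mem_Inc_bounds hi hpos hz
  exact hsub _ _ _ _ _ _
    (hrel _ (update_incLetter_strictMono hiz hzi) (update_incLetter_pos hiz) _ _ _ _ hP)
    (map_update_sublist_flatMap_leftCompBlock hz w)
    (map_update_sublist_flatMap_leftCompBlock hz w')

theorem StepRel.leftComp_left (hrel : RelabelCompat P) (hsub : SubwordCompat P)
    {i : ℕ} {v u u' : List ℕ} (hi : 1 ≤ i) (hv : v ≠ []) (hpos : ∀ c ∈ v, 0 < c)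
    (h : StepRel P u u') : leftComp u i v ≡[P] leftComp u' i v := by
  obtain ⟨w, a, b, w', hP, rfl, rfl⟩ := h
  by_cases hab : a = i ∧ b = i
  · obtain ⟨rfl, rfl⟩ := hab
    exact EqvGen.refl _
  have key : ∀ x ∈ leftCompBlock i v a, ∀ y ∈ leftCompBlock i v b,
      P (w.flatMap (leftCompBlock i v)) x y (w'.flatMap (leftCompBlock i v)) := by
    intro x hx y hy
    obtain ⟨z, hz, rfl, rfl⟩ : ∃ z ∈ Inc (i - 1) 0 v,
        Function.update (incLetter (maxLetter v - 1) i) i z a = x ∧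
        Function.update (incLetter (maxLetter v - 1) i) i z b = y := by
      unfold leftCompBlock at hx hy
      by_cases ha : a = i
      · have hb : b ≠ i := fun hb => hab ⟨ha, hb⟩
        simp only [ha, hb, if_true, if_false, List.mem_singleton] at hx hy
        exact ⟨x, hx, by simp [ha], by simp [hb, hy]⟩
      by_cases hb : b = i
      · simp only [ha, hb, if_true, if_false, List.mem_singleton] at hx hy
        exact ⟨y, hy, by simp [ha, hx], by simp [hb]⟩
      simp only [ha, hb, if_false, List.mem_singleton] at hx hy
      obtain ⟨c, hc⟩ := List.exists_mem_of_ne_nil v hv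
      exact ⟨_, List.mem_map_of_mem hc, by simp [ha, hx], by simp [hb, hy]⟩
    exact leftCompBlock_relabel hrel hsub hi hpos hz hP
  simpa [leftComp_eq_flatMap, List.flatMap_append] using EquivP.append_swap_blocks hsub key

theorem EquivP.leftComp_left (hrel : RelabelCompat P) (hsub : SubwordCompat P)
    {i : ℕ} {v u u' : List ℕ} (hi : 1 ≤ i) (hv : v ≠ []) (hpos : ∀ c ∈ v, 0 < c)
    (h : u ≡[P] u') : leftComp u i v ≡[P] leftComp u' i v :=
  h.comap fun _ _ => StepRel.leftComp_left hrel hsub hi hv hpos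

end

theorem IsPackedOn.mem_iff {k : ℕ} {w : List ℕ} (hw : IsPackedOn k w) {c : ℕ} :
    c ∈ w ↔ 1 ≤ c ∧ c ≤ k := by
  rw [← List.mem_toFinset, hw, Finset.mem_Icc]

theorem equivP_leftComp_congruence_general (P : List ℕ → ℕ → ℕ → List ℕ → Prop)
    (hrel : RelabelCompat P) (hsub : SubwordCompat P) (n m i : ℕ)
    (u u' v v' : List ℕ)
    (hv : IsPackedOn m v)
    (hi : i ∈ Finset.Icc 1 n) (hm : 1 ≤ m)
    (h1 : EquivP P u u') (h2 : EquivP P v v') :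
    EquivP P (leftComp u i v) (leftComp u' i v') := by
  have hv_ne : v ≠ [] := List.ne_nil_of_mem (hv.mem_iff.2 ⟨le_rfl, hm⟩)
  have hv_pos : ∀ c ∈ v, 0 < c := fun c hc => (hv.mem_iff.1 hc).1
  calc leftComp u i v ≡[P] leftComp u' i v :=
        h1.leftComp_left hrel hsub (Finset.mem_Icc.1 hi).1 hv_ne hv_pos
    _ ≡[P] leftComp u' i v' := h2.leftComp_right hrel hsub u' i

/-- If `P` is compatible with relabeling and with subwords, then `≡_P` is a congruence
for the left composition of packed words. -/
theorem equivP_leftComp_congruence (P : List ℕ → ℕ → ℕ → List ℕ → Prop)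
    (hrel : RelabelCompat P) (hsub : SubwordCompat P) (n m i : ℕ)
    (u u' v v' : List ℕ)
    (hu : IsPackedOn n u) (hu' : IsPackedOn n u')
    (hv : IsPackedOn m v) (hv' : IsPackedOn m v')
    (hi : i ∈ Finset.Icc 1 n) (hm : 1 ≤ m)
    (h1 : EquivP P u u') (h2 : EquivP P v v') :
    EquivP P (leftComp u i v) (leftComp u' i v') :=
  equivP_leftComp_congruence_general P hrel hsub n m i u u' v v' hv hi hm h1 h2
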